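/- Let ρ and σ be density matrices on a finite-dimensional complex Hilbert space A of dimension d, and let p, q ∈ ℝ^d be the vectors of eigenvalues of ρ and σ respectively, each arranged in non-increasing order. Then min over unitaries U on A of (1/2)·‖ρ − U σ U*‖₁ equals (1/2)·‖p − q‖₁. -/

import Mathlib

open scoped Matrix Kronecker BigOperators ENNReal ComplexOrder Classical

noncomputable section

variable {d : Type*} [Fintype d] [DecidableEq d]

/-- Apply a real function to the eigenvalues of a Hermitian matrix (spectral
functional calculus). -/
def herFun {A : Matrix d d ℂ} (hA : A.IsHermitian) (f : ℝ → ℝ) : Matrix d d ℂ :=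
  (hA.eigenvectorUnitary : Matrix d d ℂ) *
    Matrix.diagonal (fun i => (f (hA.eigenvalues i) : ℂ)) *
    (hA.eigenvectorUnitary : Matrix d d ℂ)ᴴ

/-- Functional calculus, extended by the junk value `0` to non-Hermitian matrices. -/
def matFun (A : Matrix d d ℂ) (f : ℝ → ℝ) : Matrix d d ℂ :=
  if h : A.IsHermitian then herFun h f else 0

/-- Real power of a Hermitian matrix, taken on its support (Moore–Penrose
convention: zero eigenvalues are sent to zero; negative powers are pseudo-inverses). -/
def matPow (A : Matrix d d ℂ) (r : ℝ) : Matrix d d ℂ :=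
  matFun A (fun x => if x = 0 then 0 else Real.rpow x r)

/-- Logarithm of a Hermitian matrix on its support. -/
def matLog (A : Matrix d d ℂ) : Matrix d d ℂ := matFun A Real.log

/-- A density matrix: positive semidefinite with unit trace. -/
def IsDensity (A : Matrix d d ℂ) : Prop := A.PosSemidef ∧ A.trace = 1

/-- `suppLE ρ σ` : the support of `ρ` is contained in the support of `σ`
(for Hermitian matrices this is equivalent to `ker σ ≤ ker ρ`). -/
def suppLE (ρ σ : Matrix d d ℂ) : Prop :=
  LinearMap.ker σ.mulVecLin ≤ LinearMap.ker ρ.mulVecLin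

/-- Trace (nuclear) norm of a matrix: `Tr √(AᴴA)`. -/
def traceNorm (A : Matrix d d ℂ) : ℝ := (Matrix.trace (matPow (Aᴴ * A) (1/2))).re

/-- The real-valued collision quantity `Tr[ρ σ^{-1/2} ρ σ^{-1/2}]`. -/
def Q2R (ρ σ : Matrix d d ℂ) : ℝ :=
  (Matrix.trace (ρ * matPow σ (-(1/2)) * ρ * matPow σ (-(1/2)))).re

/-- `Q₂(ρ‖σ) = Tr[ρ σ^{-1/2} ρ σ^{-1/2}]`, equal to `+∞` unless `supp ρ ⊆ supp σ`. -/
def Q2 (ρ σ : Matrix d d ℂ) : ℝ≥0∞ :=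
  if suppLE ρ σ then ENNReal.ofReal (Q2R ρ σ) else ∞

/-- Collision relative entropy `D₂(ρ‖σ) = log Q₂(ρ‖σ)`. -/
def D2 (ρ σ : Matrix d d ℂ) : EReal := ENNReal.log (Q2 ρ σ)

/-- Fidelity `F(ρ,σ) = ‖√ρ √σ‖₁`. -/
def fidelity (ρ σ : Matrix d d ℂ) : ℝ := traceNorm (matPow ρ (1/2) * matPow σ (1/2))

/-- Purified distance `P(ρ,σ) = √(1 - F(ρ,σ)²)`. -/
def purifiedDist (ρ σ : Matrix d d ℂ) : ℝ := Real.sqrt (1 - fidelity ρ σ ^ 2)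

/-!
The lower bound is Mirsky's inequality `∑ |p i - q i| ≤ ‖A - B‖₁` for Hermitian `A`, `B`. With
`C⁻` the negative part of `C = A - B`, the matrix `A + C⁻` dominates both `A` and `B` in the
Loewner order, so by Weyl's monotonicity principle its sorted eigenvalues `r` dominate `p` and `q`
termwise. Hence `∑ |p - q| ≤ ∑ (2 r - p - q) = tr (C + 2 C⁻) = ‖C‖₁`.
Weyl's principle follows by evaluating the quadratic forms on a unit vector lying both in the span
of the top `k + 1` eigenvectors of the smaller operator and in the span of the bottom `m - k`
eigenvectors of the larger one.
The bound is attained by the unitary carrying a sorted eigenbasis of `σ` onto one of `ρ`: then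
`ρ - U σ U*` is diagonal in that basis with entries `p i - q i`.
-/

open Matrix Finset
open scoped InnerProductSpace MatrixOrder

theorem exists_perm_antitone_comp {α : Type*} [LinearOrder α] {m : ℕ} (f : Fin m → α) :
    ∃ σ : Equiv.Perm (Fin m), Antitone (f ∘ σ) :=
  ⟨Fin.revPerm.trans (Tuple.sort f), (Tuple.monotone_sort f).comp_antitone Fin.rev_anti⟩

section Weyl

variable {𝕜 E ι : Type*} [RCLike 𝕜] [NormedAddCommGroup E] [InnerProductSpace 𝕜 E] [Fintype ι]

theorem OrthonormalBasis.inner_eq_zero_of_mem_span_image (v : OrthonormalBasis ι 𝕜 E)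
    {s : Set ι} {x : E} (hx : x ∈ Submodule.span 𝕜 (v '' s)) {i : ι} (hi : i ∉ s) :
    ⟪v i, x⟫_𝕜 = 0 := by
  induction hx using Submodule.span_induction with
  | mem y hy =>
    obtain ⟨j, hj, rfl⟩ := hy
    exact v.orthonormal.2 fun h => hi (h ▸ hj)
  | zero => exact inner_zero_right _
  | add y z _ _ hy hz => rw [inner_add_right, hy, hz, add_zero]
  | smul c y _ hy => rw [inner_smul_right, hy, mul_zero]

theorem OrthonormalBasis.finrank_span_image (v : OrthonormalBasis ι 𝕜 E) (s : Finset ι) :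
    Module.finrank 𝕜 (Submodule.span 𝕜 (v '' s)) = s.card := by
  rw [Set.image_eq_range, finrank_span_eq_card]
  · simp
  · exact (v.orthonormal.comp _ Subtype.val_injective).linearIndependent

theorem re_inner_apply_eq_sum_of_apply_eq_smul {T : E →ₗ[𝕜] E} (v : OrthonormalBasis ι 𝕜 E)
    {μ : ι → ℝ} (hv : ∀ i, T (v i) = (μ i : 𝕜) • v i) (x : E) :
    RCLike.re ⟪x, T x⟫_𝕜 = ∑ i, μ i * ‖⟪v i, x⟫_𝕜‖ ^ 2 := by
  have hTx : T x = ∑ i, ((μ i : 𝕜) * ⟪v i, x⟫_𝕜) • v i := by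
    conv_lhs => rw [← v.sum_repr' x]
    simp only [map_sum, map_smul, hv, smul_smul, mul_comm]
  rw [hTx, inner_sum, map_sum]
  refine Finset.sum_congr rfl fun i _ => ?_
  rw [inner_smul_right, ← inner_conj_symm x (v i), mul_assoc, RCLike.mul_conj,
    ← RCLike.ofReal_pow, ← RCLike.ofReal_mul, RCLike.ofReal_re]

theorem OrthonormalBasis.sum_mul_sq_norm_inner_le_of_mem_span (v : OrthonormalBasis ι 𝕜 E)
    {s : Set ι} {x : E} (hx : x ∈ Submodule.span 𝕜 (v '' s)) {f g : ι → ℝ} (hfg : ∀ i ∈ s, f i ≤ g i) :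
    ∑ i, f i * ‖⟪v i, x⟫_𝕜‖ ^ 2 ≤ ∑ i, g i * ‖⟪v i, x⟫_𝕜‖ ^ 2 := by
  refine Finset.sum_le_sum fun i _ => ?_
  by_cases hi : i ∈ s
  · exact mul_le_mul_of_nonneg_right (hfg i hi) (by positivity)
  · simp [v.inner_eq_zero_of_mem_span_image hx hi]

theorem LinearMap.re_inner_apply_le_of_le {T S : E →ₗ[𝕜] E} (hTS : T ≤ S) (x : E) :
    RCLike.re ⟪x, T x⟫_𝕜 ≤ RCLike.re ⟪x, S x⟫_𝕜 := by
  have := ((LinearMap.le_def T S).mp hTS).re_inner_nonneg_right x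
  rw [LinearMap.sub_apply, inner_sub_right, map_sub] at this
  linarith

theorem LinearMap.eigenvalue_le_of_le {m : ℕ} {T S : E →ₗ[𝕜] E} (hTS : T ≤ S)
    {v w : OrthonormalBasis (Fin m) 𝕜 E} {μ ν : Fin m → ℝ} (hμ : Antitone μ) (hν : Antitone ν)
    (hv : ∀ i, T (v i) = (μ i : 𝕜) • v i) (hw : ∀ i, S (w i) = (ν i : 𝕜) • w i) (k : Fin m) :
    μ k ≤ ν k := by
  have := v.toBasis.finiteDimensional_of_finite
  set V := Submodule.span 𝕜 (v '' ↑(Finset.Iic k))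
  set W := Submodule.span 𝕜 (w '' ↑(Finset.Ici k))
  -- `dim V + dim W = (k + 1) + (m - k) > dim E`, so `V` and `W` meet nontrivially.
  obtain ⟨x, hxVW, hx0⟩ : ∃ x ∈ V ⊓ W, x ≠ 0 := by
    refine Submodule.exists_mem_ne_zero_of_ne_bot fun hbot => ?_
    have := Submodule.finrank_add_finrank_le_of_disjoint (disjoint_iff.mpr hbot)
    rw [v.finrank_span_image, w.finrank_span_image, Fin.card_Iic, Fin.card_Ici,
      Module.finrank_eq_card_basis v.toBasis, Fintype.card_fin] at this
    omega
  obtain ⟨hxV, hxW⟩ := Submodule.mem_inf.mp hxVW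
  have hx : 0 < ‖x‖ ^ 2 := by positivity
  refine le_of_mul_le_mul_right ?_ hx
  calc μ k * ‖x‖ ^ 2 = ∑ i, μ k * ‖⟪v i, x⟫_𝕜‖ ^ 2 := by
        rw [← Finset.mul_sum, v.sum_sq_norm_inner_right]
    _ ≤ ∑ i, μ i * ‖⟪v i, x⟫_𝕜‖ ^ 2 :=
        v.sum_mul_sq_norm_inner_le_of_mem_span hxV fun i hi => hμ (Finset.mem_Iic.mp hi)
    _ = RCLike.re ⟪x, T x⟫_𝕜 := (re_inner_apply_eq_sum_of_apply_eq_smul v hv x).symm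
    _ ≤ RCLike.re ⟪x, S x⟫_𝕜 := LinearMap.re_inner_apply_le_of_le hTS x
    _ = ∑ i, ν i * ‖⟪w i, x⟫_𝕜‖ ^ 2 := re_inner_apply_eq_sum_of_apply_eq_smul w hw x
    _ ≤ ∑ i, ν k * ‖⟪w i, x⟫_𝕜‖ ^ 2 :=
        w.sum_mul_sq_norm_inner_le_of_mem_span hxW fun i hi => hν (Finset.mem_Ici.mp hi)
    _ = ν k * ‖x‖ ^ 2 := by rw [← Finset.mul_sum, w.sum_sq_norm_inner_right]

end Weyl

section Spectrum

variable {𝕜 : Type*} [RCLike 𝕜]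

theorem Matrix.IsHermitian.toEuclideanLin_eigenvectorBasis {A : Matrix d d 𝕜}
    (hA : A.IsHermitian) (i : d) :
    toEuclideanLin A (hA.eigenvectorBasis i) = (hA.eigenvalues i : 𝕜) • hA.eigenvectorBasis i := by
  ext j
  rw [← RCLike.real_smul_eq_coe_smul (K := 𝕜)]
  exact congrFun (hA.mulVec_eigenvectorBasis i) j

theorem Matrix.toEuclideanLin_le_toEuclideanLin {A B : Matrix d d 𝕜} (hAB : A ≤ B) :
    toEuclideanLin A ≤ toEuclideanLin B := by
  rw [LinearMap.le_def, ← map_sub, Matrix.isPositive_toEuclideanLin_iff]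
  exact hAB

theorem Matrix.IsHermitian.eigenvalues_comp_le_of_le {m : ℕ} {A B : Matrix d d 𝕜}
    (hA : A.IsHermitian) (hB : B.IsHermitian) (hAB : A ≤ B) {p q : Fin m → ℝ}
    (hp : Antitone p) (hq : Antitone q) (e f : Fin m ≃ d)
    (hpe : ∀ i, p i = hA.eigenvalues (e i)) (hqe : ∀ i, q i = hB.eigenvalues (f i)) (k : Fin m) :
    p k ≤ q k :=
  LinearMap.eigenvalue_le_of_le (toEuclideanLin_le_toEuclideanLin hAB) hp hq
    (v := hA.eigenvectorBasis.reindex e.symm) (w := hB.eigenvectorBasis.reindex f.symm)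
    (fun i => by simp [hpe, hA.toEuclideanLin_eigenvectorBasis])
    (fun i => by simp [hqe, hB.toEuclideanLin_eigenvectorBasis]) k

theorem Matrix.IsHermitian.sum_eigenvalues_comp_equiv {ι : Type*} [Fintype ι] {A : Matrix d d 𝕜}
    (hA : A.IsHermitian) (e : ι ≃ d) : ∑ i, hA.eigenvalues (e i) = RCLike.re A.trace := by
  rw [e.sum_comp, hA.trace_eq_sum_eigenvalues, map_sum]
  simp

theorem Matrix.charpoly_unitary_conj {A U : Matrix d d 𝕜} (hU : U ∈ unitaryGroup d 𝕜) :
    (U * A * star U).charpoly = A.charpoly := by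
  rw [charpoly_mul_comm, ← Matrix.mul_assoc, Unitary.star_mul_self_of_mem hU, Matrix.one_mul]

theorem Matrix.IsHermitian.eigenvalues_unitary_conj {A U : Matrix d d 𝕜} (hA : A.IsHermitian)
    (hU : U ∈ unitaryGroup d 𝕜) (hUA : (U * A * star U).IsHermitian) :
    hUA.eigenvalues = hA.eigenvalues :=
  (eigenvalues_eq_eigenvalues_iff hUA hA).mpr (charpoly_unitary_conj hU)

open Polynomial in
theorem Matrix.IsHermitian.sum_comp_eigenvalues_of_charpoly_eq {A : Matrix d d 𝕜}
    (hA : A.IsHermitian) {r : d → ℝ} (hr : A.charpoly = ∏ i, (X - C (r i : 𝕜))) (φ : ℝ → ℝ) :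
    ∑ i, φ (hA.eigenvalues i) = ∑ i, φ (r i) := by
  have hroots : univ.val.map hA.eigenvalues = univ.val.map r := by
    refine Multiset.map_injective (RCLike.ofReal_injective (K := 𝕜)) ?_
    rw [Multiset.map_map, Multiset.map_map, ← hA.roots_charpoly_eq_eigenvalues, hr,
      roots_prod _ _ (prod_ne_zero_iff.mpr fun i _ => X_sub_C_ne_zero _)]
    simp only [roots_X_sub_C, Multiset.bind_singleton]
    rfl
  have := congrArg (fun s => (s.map φ).sum) hroots
  simp only [Multiset.map_map] at this
  rw [Finset.sum_eq_multiset_sum, Finset.sum_eq_multiset_sum]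
  exact this

theorem Matrix.IsHermitian.exists_unitary_conj_diagonal_comp {A : Matrix d d 𝕜} (hA : A.IsHermitian)
    (e : Equiv.Perm d) : ∃ M ∈ unitaryGroup d 𝕜,
      A = M * diagonal (fun i => (hA.eigenvalues (e i) : 𝕜)) * star M := by
  set V : Matrix d d 𝕜 := (hA.eigenvectorUnitary : Matrix d d 𝕜)
  have hstar : star (V.submatrix id e) = (star V).submatrix e id := conjTranspose_submatrix _ _ _
  refine ⟨V.submatrix id e, ?_, ?_⟩
  · rw [mem_unitaryGroup_iff', hstar, ← submatrix_mul _ _ _ _ _ Function.bijective_id,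
      Unitary.star_mul_self_of_mem hA.eigenvectorUnitary.2, submatrix_one_equiv]
  · have hdiag : diagonal (fun i => (hA.eigenvalues (e i) : 𝕜)) =
        (diagonal (RCLike.ofReal ∘ hA.eigenvalues)).submatrix e e :=
      (submatrix_diagonal_equiv (RCLike.ofReal ∘ hA.eigenvalues) e).symm
    rw [hstar, hdiag, submatrix_mul_equiv, submatrix_mul_equiv, submatrix_id_id]
    simpa using hA.spectral_theorem

end Spectrum

theorem herFun_add {A : Matrix d d ℂ} (hA : A.IsHermitian) (f g : ℝ → ℝ) :
    herFun hA f + herFun hA g = herFun hA (fun x => f x + g x) := by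
  simp only [herFun, ← Matrix.add_mul, ← Matrix.mul_add, diagonal_add, Complex.ofReal_add]

theorem herFun_id {A : Matrix d d ℂ} (hA : A.IsHermitian) : herFun hA (fun x => x) = A := by
  conv_rhs => rw [hA.spectral_theorem]
  rfl

theorem herFun_posSemidef {A : Matrix d d ℂ} (hA : A.IsHermitian) {f : ℝ → ℝ}
    (hf : ∀ x, 0 ≤ f x) : (herFun hA f).PosSemidef :=
  PosSemidef.mul_mul_conjTranspose_same
    (posSemidef_diagonal_iff.mpr fun _ => Complex.zero_le_real.mpr (hf _)) _

theorem trace_herFun {A : Matrix d d ℂ} (hA : A.IsHermitian) (f : ℝ → ℝ) :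
    (herFun hA f).trace = ∑ i, (f (hA.eigenvalues i) : ℂ) := by
  rw [herFun, trace_mul_cycle, ← star_eq_conjTranspose,
    Unitary.star_mul_self_of_mem hA.eigenvectorUnitary.2, Matrix.one_mul, trace_diagonal]

theorem traceNorm_unitary_conj_diagonal {M : Matrix d d ℂ} (hM : M ∈ unitaryGroup d ℂ)
    (r : d → ℝ) : traceNorm (M * diagonal (fun i => (r i : ℂ)) * star M) = ∑ i, |r i| := by
  set X := M * diagonal (fun i => (r i : ℂ)) * star M
  have hXX : Xᴴ * X = M * diagonal (fun i => ((r i ^ 2 : ℝ) : ℂ)) * star M := by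
    have hX : Xᴴ = X := by
      simp [X, Matrix.mul_assoc, star_eq_conjTranspose, diagonal_conjTranspose, Pi.star_def]
    rw [hX]
    simp only [X, Matrix.mul_assoc]
    rw [← Matrix.mul_assoc (star M) M, Unitary.star_mul_self_of_mem hM, Matrix.one_mul,
      ← Matrix.mul_assoc (diagonal _), diagonal_mul_diagonal]
    simp [sq]
  have hXXh : (Xᴴ * X).IsHermitian := isHermitian_conjTranspose_mul_self X
  have hsum := hXXh.sum_comp_eigenvalues_of_charpoly_eq (r := fun i => r i ^ 2)
    (by rw [hXX, charpoly_unitary_conj hM, charpoly_diagonal]; rfl)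
    (fun x => if x = 0 then 0 else Real.rpow x (1 / 2))
  rw [traceNorm, matPow, matFun, dif_pos hXXh, trace_herFun, ← Complex.ofReal_sum,
    Complex.ofReal_re, hsum]
  refine Finset.sum_congr rfl fun i _ => ?_
  rcases eq_or_ne (r i) 0 with h | h
  · simp [h]
  · rw [if_neg (pow_ne_zero 2 h)]
    exact (Real.sqrt_eq_rpow _).symm.trans (Real.sqrt_sq_eq_abs _)

theorem traceNorm_eq_sum_abs_eigenvalues {C : Matrix d d ℂ} (hC : C.IsHermitian) :
    traceNorm C = ∑ i, |hC.eigenvalues i| := by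
  conv_lhs => rw [hC.spectral_theorem, Unitary.conjStarAlgAut_apply]
  exact traceNorm_unitary_conj_diagonal hC.eigenvectorUnitary.2 _

theorem traceNorm_eq_re_trace_add_two_mul_negPart {C : Matrix d d ℂ} (hC : C.IsHermitian) :
    traceNorm C = C.trace.re + 2 * (herFun hC (fun x => x⁻)).trace.re := by
  rw [traceNorm_eq_sum_abs_eigenvalues hC, hC.trace_eq_sum_eigenvalues, trace_herFun,
    Complex.re_sum, Complex.re_sum, Finset.mul_sum, ← Finset.sum_add_distrib]
  refine Finset.sum_congr rfl fun i _ => ?_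
  have h := abs_sub_eq_two_nsmul_negPart (hC.eigenvalues i)
  rw [two_nsmul] at h
  simp only [RCLike.ofReal_eq_complex_ofReal, Complex.ofReal_re]
  linarith

theorem sum_abs_sub_le_traceNorm_sub {m : ℕ} {A B : Matrix d d ℂ} (hA : A.IsHermitian)
    (hB : B.IsHermitian) {p q : Fin m → ℝ} (hp : Antitone p) (hq : Antitone q) (e f : Fin m ≃ d)
    (hpe : ∀ i, p i = hA.eigenvalues (e i)) (hqe : ∀ i, q i = hB.eigenvalues (f i)) :
    ∑ i, |p i - q i| ≤ traceNorm (A - B) := by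
  have hC := hA.sub hB
  set Cneg := herFun hC (fun x => x⁻)
  have hCneg : Cneg.PosSemidef := herFun_posSemidef hC negPart_nonneg
  have hA' : (A + Cneg).IsHermitian := hA.add hCneg.isHermitian
  have hAA' : A ≤ A + Cneg := by rwa [le_iff, add_sub_cancel_left]
  have hBA' : B ≤ A + Cneg := by
    rw [le_iff, show A + Cneg - B = herFun hC (fun x => x + x⁻) by
      rw [← herFun_add, herFun_id]; abel]
    exact herFun_posSemidef hC fun x => by linarith [posPart_sub_negPart x, posPart_nonneg x]
  obtain ⟨g, hr⟩ := exists_perm_antitone_comp (hA'.eigenvalues ∘ e)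
  set r := (hA'.eigenvalues ∘ e) ∘ g
  have hpr := hA.eigenvalues_comp_le_of_le hA' hAA' hp hr e (g.trans e) hpe fun _ => rfl
  have hqr := hB.eigenvalues_comp_le_of_le hA' hBA' hq hr f (g.trans e) hqe fun _ => rfl
  have hsum_p : ∑ i, p i = A.trace.re := by
    simp only [hpe, hA.sum_eigenvalues_comp_equiv e, RCLike.re_to_complex]
  have hsum_q : ∑ i, q i = B.trace.re := by
    simp only [hqe, hB.sum_eigenvalues_comp_equiv f, RCLike.re_to_complex]
  have hsum_r : ∑ i, r i = A.trace.re + Cneg.trace.re := by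
    rw [← Complex.add_re, ← trace_add, ← RCLike.re_to_complex,
      ← hA'.sum_eigenvalues_comp_equiv (g.trans e)]
    rfl
  calc ∑ i, |p i - q i| ≤ ∑ i, ((r i - p i) + (r i - q i)) :=
        Finset.sum_le_sum fun i _ =>
          abs_sub_le_iff.mpr ⟨by linarith [hpr i, hqr i], by linarith [hpr i, hqr i]⟩
    _ = (A - B).trace.re + 2 * Cneg.trace.re := by
        simp only [Finset.sum_add_distrib, Finset.sum_sub_distrib, trace_sub, Complex.sub_re]
        linarith
    _ = traceNorm (A - B) := (traceNorm_eq_re_trace_add_two_mul_negPart hC).symm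

/-- **Lemma (optimal unitary orbit distance)**: the minimal trace distance between `ρ` and the
unitary orbit of `σ` equals half the `ℓ₁` distance between their sorted eigenvalue vectors. -/
theorem min_unitary_traceDist_eq (dd : ℕ)
    (ρ σ : Matrix (Fin dd) (Fin dd) ℂ) (hρ : IsDensity ρ) (hσ : IsDensity σ)
    (p q : Fin dd → ℝ) (hpa : Antitone p) (hqa : Antitone q)
    (hp : ∃ e : Equiv.Perm (Fin dd), ∀ i, p i = hρ.1.1.eigenvalues (e i))
    (hq : ∃ e : Equiv.Perm (Fin dd), ∀ i, q i = hσ.1.1.eigenvalues (e i)) :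
    sInf {x : ℝ | ∃ U : Matrix.unitaryGroup (Fin dd) ℂ,
        x = (1/2) * traceNorm (ρ - (U : Matrix (Fin dd) (Fin dd) ℂ) * σ
              * star (U : Matrix (Fin dd) (Fin dd) ℂ))}
      = (1/2) * ∑ i, |p i - q i| := by
  obtain ⟨e, hpe⟩ := hp
  obtain ⟨f, hqe⟩ := hq
  obtain ⟨M, hM, hρM⟩ := hρ.1.1.exists_unitary_conj_diagonal_comp e
  obtain ⟨N, hN, hσN⟩ := hσ.1.1.exists_unitary_conj_diagonal_comp f
  simp only [← hpe] at hρM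
  simp only [← hqe] at hσN
  refine IsLeast.csInf_eq ⟨⟨⟨M * star N, mul_mem hM (Unitary.star_mem hN)⟩, ?_⟩, ?_⟩
  · have hdiff : ρ - M * star N * σ * star (M * star N) =
        M * diagonal (fun i => ((p i - q i : ℝ) : ℂ)) * star M := by
      have hNN := Unitary.star_mul_self_of_mem hN
      rw [hρM, hσN, star_mul, star_star]
      simp only [Matrix.mul_assoc]
      rw [← Matrix.mul_assoc (star N) N, hNN, Matrix.one_mul, ← Matrix.mul_assoc (star N) N, hNN,
        Matrix.one_mul, ← Matrix.mul_sub, ← Matrix.sub_mul, diagonal_sub]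
      simp only [Complex.ofReal_sub]
      rfl
    change _ = 1 / 2 * traceNorm (ρ - M * star N * σ * star (M * star N))
    rw [hdiff, traceNorm_unitary_conj_diagonal hM]
  · rintro x ⟨⟨U, hU⟩, rfl⟩
    have hσU : (U * σ * star U).IsHermitian := isHermitian_mul_mul_conjTranspose _ hσ.1.1
    have := sum_abs_sub_le_traceNorm_sub hρ.1.1 hσU hpa hqa e f hpe
      (by rwa [hσ.1.1.eigenvalues_unitary_conj hU hσU])
    linarith
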